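/- arXiv:hep-th/0603053 — 3 statements merged into one kernel-verified Lean document; each statement's English description precedes it below -/
import Mathlib

section
/- Let A = C^∞(M) decomposed into spectral subspaces A_r (r ∈ ℤ^n) for an action σ of the torus T^n, and let θ be a real antisymmetric n×n matrix. Define on homogeneous elements f_r × _θ g_{r'} = e^{π i r·θ·r'} f_r g_{r'}. Then ×_θ extends to an associative product on A, and the involution f ↦ f* (which sends A_r to A_{−r}) satisfies (f ×_θ g)* = g* ×_θ f*, making (A, ×_θ, *) an associative *-algebra. -/
open DirectSum

/-- The θ-deformation of a ℤⁿ-graded commutative *-algebra: the product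
`f_r ×_θ g_{r'} = e^{πi r·θ·r'} f_r g_{r'}` on homogeneous elements extends to an
associative bilinear product on `A`, for which `(f ×_θ g)* = g* ×_θ f*`, making
`(A, ×_θ, *)` an associative *-algebra. -/
theorem stmt_10
    (n : ℕ) (θ : Matrix (Fin n) (Fin n) ℝ)
    (hθ : ∀ j k, θ k j = -θ j k)                       -- antisymmetry
    (A : Type*) [CommRing A] [Algebra ℂ A] [StarRing A] [StarModule ℂ A]
    (𝒜 : (Fin n → ℤ) → Submodule ℂ A) [GradedAlgebra 𝒜]
    (hstar : ∀ (rr : Fin n → ℤ) (a : A), a ∈ 𝒜 rr → star a ∈ 𝒜 (-rr)) :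
    ∃ mul : A →ₗ[ℂ] A →ₗ[ℂ] A,
      (∀ (rr rr' : Fin n → ℤ) (a b : A), a ∈ 𝒜 rr → b ∈ 𝒜 rr' →
        mul a b = Complex.exp (Real.pi * Complex.I *
          (∑ j, ∑ k, (rr j : ℂ) * (θ j k : ℂ) * (rr' k : ℂ))) • (a * b))
      ∧ (∀ a b c : A, mul (mul a b) c = mul a (mul b c))
      ∧ (∀ a b : A, star (mul a b) = mul (star b) (star a)) := by
  classical
  set S : (Fin n → ℤ) → (Fin n → ℤ) → ℂ :=
    fun r r' => ∑ j, ∑ k, (r j : ℂ) * (θ j k : ℂ) * (r' k : ℂ) with hSdef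
  set ε : (Fin n → ℤ) → (Fin n → ℤ) → ℂ :=
    fun r r' => Complex.exp (Real.pi * Complex.I * S r r') with hεdef
  -- arithmetic facts about S
  have S_add_left : ∀ r r'' r' : Fin n → ℤ, S (r + r'') r' = S r r' + S r'' r' := by
    intro r r'' r'
    simp [hSdef, Pi.add_apply, Int.cast_add, add_mul, Finset.sum_add_distrib]
  have S_add_right : ∀ r r' r'' : Fin n → ℤ, S r (r' + r'') = S r r' + S r r'' := by
    intro r r' r''
    simp [hSdef, Pi.add_apply, Int.cast_add, mul_add, Finset.sum_add_distrib]
  have S_neg_neg : ∀ r r' : Fin n → ℤ, S (-r) (-r') = S r r' := by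
    intro r r'
    simp [hSdef, Pi.neg_apply, neg_mul, mul_neg, neg_neg]
  have S_swap : ∀ r r' : Fin n → ℤ, S r' r = - S r r' := by
    intro r r'
    have hθ' : ∀ j k, ((θ j k : ℝ) : ℂ) = -((θ k j : ℝ) : ℂ) := by
      intro j k; rw [hθ k j]; push_cast; ring
    calc S r' r = ∑ j, ∑ k, (r' j : ℂ) * (θ j k : ℂ) * (r k : ℂ) := rfl
      _ = ∑ k, ∑ j, (r' j : ℂ) * (θ j k : ℂ) * (r k : ℂ) := Finset.sum_comm
      _ = ∑ k, ∑ j, -((r k : ℂ) * (θ k j : ℂ) * (r' j : ℂ)) := by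
          refine Finset.sum_congr rfl fun k _ => Finset.sum_congr rfl fun j _ => ?_
          rw [hθ' j k]; ring
      _ = - S r r' := by
          simp [hSdef, Finset.sum_neg_distrib]
  have S_conj : ∀ r r' : Fin n → ℤ, (starRingEnd ℂ) (S r r') = S r r' := by
    intro r r'
    simp [hSdef, map_sum, map_mul, Complex.conj_ofReal]
  -- the bilinear product
  let m : ∀ r r' : Fin n → ℤ, 𝒜 r →ₗ[ℂ] 𝒜 r' →ₗ[ℂ] A := fun r r' =>
    ε r r' • ((LinearMap.mul ℂ A).compl₁₂ (𝒜 r).subtype (𝒜 r').subtype)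
  let H : ∀ r : Fin n → ℤ, (⨁ i, 𝒜 i) →ₗ[ℂ] 𝒜 r →ₗ[ℂ] A := fun r =>
    DirectSum.toModule ℂ _ _ (fun r' => (m r r').flip)
  let F : (⨁ i, 𝒜 i) →ₗ[ℂ] (⨁ i, 𝒜 i) →ₗ[ℂ] A :=
    DirectSum.toModule ℂ _ _ (fun r => (H r).flip)
  let D : A →ₗ[ℂ] ⨁ i, 𝒜 i := (DirectSum.decomposeLinearEquiv 𝒜).toLinearMap
  let mul : A →ₗ[ℂ] A →ₗ[ℂ] A := (F.comp D).compl₂ D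
  -- key evaluation on homogeneous elements
  have key : ∀ (rr rr' : Fin n → ℤ) (a b : A), a ∈ 𝒜 rr → b ∈ 𝒜 rr' →
      mul a b = ε rr rr' • (a * b) := by
    intro rr rr' a b ha hb
    have hda : D a = DirectSum.lof ℂ _ (fun i => 𝒜 i) rr ⟨a, ha⟩ := by
      simp [D, DirectSum.decomposeLinearEquiv_apply, DirectSum.decompose_of_mem 𝒜 ha, DirectSum.lof_eq_of]
    have hdb : D b = DirectSum.lof ℂ _ (fun i => 𝒜 i) rr' ⟨b, hb⟩ := by
      simp [D, DirectSum.decomposeLinearEquiv_apply, DirectSum.decompose_of_mem 𝒜 hb, DirectSum.lof_eq_of]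
    show F (D a) (D b) = _
    rw [hda, hdb]
    simp [F, H, m, DirectSum.toModule_lof]
  refine ⟨mul, fun rr rr' a b ha hb => key rr rr' a b ha hb, ?_, ?_⟩
  · -- associativity
    intro a b c
    induction a using DirectSum.Decomposition.inductionOn 𝒜 with
    | zero => simp
    | add a a' ha ha' => simp [map_add, ha, ha']
    | @homogeneous r a0 =>
      induction b using DirectSum.Decomposition.inductionOn 𝒜 with
      | zero => simp
      | add b b' hb hb' => simp [map_add, LinearMap.add_apply, hb, hb']
      | @homogeneous r' b0 =>
        induction c using DirectSum.Decomposition.inductionOn 𝒜 with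
        | zero => simp
        | add c c' hc hc' => simp [map_add, hc, hc']
        | @homogeneous r'' c0 =>
          have ha : (a0 : A) ∈ 𝒜 r := a0.2
          have hb : (b0 : A) ∈ 𝒜 r' := b0.2
          have hc : (c0 : A) ∈ 𝒜 r'' := c0.2
          have hab : (a0 : A) * b0 ∈ 𝒜 (r + r') := SetLike.mul_mem_graded ha hb
          have hbc : (b0 : A) * c0 ∈ 𝒜 (r' + r'') := SetLike.mul_mem_graded hb hc
          rw [key r r' _ _ ha hb, key r' r'' _ _ hb hc, map_smul,
            LinearMap.smul_apply, map_smul, key (r + r') r'' _ _ hab hc,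
            key r (r' + r'') _ _ ha hbc, smul_smul, smul_smul, mul_assoc]
          congr 1
          rw [hεdef, ← Complex.exp_add, ← Complex.exp_add,
            S_add_left, S_add_right]
          ring_nf
  · -- star property
    intro a b
    induction a using DirectSum.Decomposition.inductionOn 𝒜 with
    | zero => simp
    | add a a' ha ha' => simp [map_add, LinearMap.add_apply, star_add, ha, ha']
    | @homogeneous r a0 =>
      induction b using DirectSum.Decomposition.inductionOn 𝒜 with
      | zero => simp
      | add b b' hb hb' => simp [map_add, star_add, hb, hb']
      | @homogeneous r' b0 =>
        have ha : (a0 : A) ∈ 𝒜 r := a0.2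
        have hb : (b0 : A) ∈ 𝒜 r' := b0.2
        rw [key r r' _ _ ha hb, key (-r') (-r) _ _ (hstar r' _ hb) (hstar r _ ha),
          star_smul, star_mul', mul_comm (star (a0 : A))]
        congr 1
        show (starRingEnd ℂ) (ε r r') = ε (-r') (-r)
        simp only [hεdef]
        rw [S_neg_neg r' r, S_swap r r', ← Complex.exp_conj]
        congr 1
        simp only [map_mul, Complex.conj_I, Complex.conj_ofReal, S_conj]
        ring
end

section
/- Let ψ₁,…,ψ₄ be the generators of A(S_{θ'}^7) and form the 4×2 matrix Ψ with columns |ψ₁⟩ = (ψ₁, ψ₂, ψ₃, ψ₄)^t and |ψ₂⟩ = (−ψ₂*, ψ₁*, −ψ₄*, ψ₃*)^t. Then Ψ*Ψ = 1₂, and hence p := ΨΨ* is a self-adjoint idempotent in M₄(A(S_{θ'}^7)): p² = p = p*. -/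
/-!
The relations `ψ₁ψ₂ = ψ₂ψ₁` and `ψ₃ψ₄ = ψ₄ψ₃` (the entries `λ'₁₂ = λ'₃₄ = 1`) make the two
columns of `Ψ` orthogonal, and normality of each `ψ_a` (the entries `λ'_aa = 1`) turns the
norm of the second column into the sphere relation `Σ ψ_a*ψ_a = 1`. So `Ψ` is an isometry,
and `ΨΨ*` is then a projection for any isometry `Ψ`.
-/

open scoped Matrix

theorem Matrix.isIdempotentElem_mul_conjTranspose_self {m n α : Type*} [Fintype m] [Fintype n]
    [DecidableEq n] [Semiring α] [StarRing α] {V : Matrix m n α} (hV : Vᴴ * V = 1) :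
    IsIdempotentElem (V * Vᴴ) := by
  rw [IsIdempotentElem, Matrix.mul_assoc, ← Matrix.mul_assoc Vᴴ, hV, Matrix.one_mul]

section QuaternionicFrame

variable {R : Type*} [Ring R] [StarRing R]

def quaternionicFrame (ψ : Fin 4 → R) : Matrix (Fin 4) (Fin 2) R :=
  Matrix.of ![![ψ 0, -star (ψ 1)],
              ![ψ 1,  star (ψ 0)],
              ![ψ 2, -star (ψ 3)],
              ![ψ 3,  star (ψ 2)]]

theorem conjTranspose_quaternionicFrame_mul_self {ψ : Fin 4 → R}
    (h01 : Commute (ψ 0) (ψ 1)) (h23 : Commute (ψ 2) (ψ 3))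
    (hnormal : ∀ a, IsStarNormal (ψ a)) (hsphere : ∑ a, star (ψ a) * ψ a = 1) :
    (quaternionicFrame ψ)ᴴ * quaternionicFrame ψ = 1 := by
  rw [Fin.sum_univ_four] at hsphere
  have hnormal' a : ψ a * star (ψ a) = star (ψ a) * ψ a := (hnormal a).star_comm_self.symm.eq
  ext i j
  fin_cases i <;> fin_cases j <;>
    simp only [quaternionicFrame, Matrix.mul_apply, Matrix.conjTranspose_apply, Matrix.of_apply,
      Matrix.cons_val', Matrix.cons_val, Matrix.cons_val_zero, Matrix.cons_val_one,
      Matrix.cons_val_fin_one, Fin.sum_univ_four, Fin.isValue, Fin.zero_eta, Fin.mk_one,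
      Matrix.one_apply_eq, Matrix.one_apply_ne, ne_eq, zero_ne_one, one_ne_zero, not_false_eq_true,
      star_neg, star_star, mul_neg, neg_mul, neg_neg, hnormal']
  · exact hsphere
  · rw [h01.star_star.eq, h23.star_star.eq]; abel
  · rw [h01.eq, h23.eq]; abel
  · rw [← hsphere]; abel

end QuaternionicFrame

theorem stmt_14_general
    (A : Type*) [Ring A] [Algebra ℂ A] [StarRing A]
    (mu : ℂ)
    (ψ : Fin 4 → A)
    (lam' : Fin 4 → Fin 4 → ℂ)
    (hlam' : lam' = fun a b =>
      !![(1 : ℂ), 1, (starRingEnd ℂ) mu, mu;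
         1, 1, mu, (starRingEnd ℂ) mu;
         mu, (starRingEnd ℂ) mu, 1, 1;
         (starRingEnd ℂ) mu, mu, 1, 1] a b)
    (hrel1 : ∀ a b, ψ a * ψ b = lam' a b • (ψ b * ψ a))
    (hrel2 : ∀ a b, ψ a * star (ψ b) = lam' b a • (star (ψ b) * ψ a))
    (hsphere : ∑ a, star (ψ a) * ψ a = 1)
    (Ψ : Matrix (Fin 4) (Fin 2) A)
    (hΨ : Ψ = Matrix.of ![![ψ 0, -star (ψ 1)],
                          ![ψ 1,  star (ψ 0)],
                          ![ψ 2, -star (ψ 3)],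
                          ![ψ 3,  star (ψ 2)]]) :
    Ψᴴ * Ψ = 1
    ∧ (Ψ * Ψᴴ) * (Ψ * Ψᴴ) = Ψ * Ψᴴ
    ∧ (Ψ * Ψᴴ)ᴴ = Ψ * Ψᴴ := by
  have h01 : Commute (ψ 0) (ψ 1) :=
    (by simpa [hlam'] using hrel1 0 1 : ψ 0 * ψ 1 = ψ 1 * ψ 0)
  have h23 : Commute (ψ 2) (ψ 3) :=
    (by simpa [hlam'] using hrel1 2 3 : ψ 2 * ψ 3 = ψ 3 * ψ 2)
  have hdiag a : lam' a a = 1 := by fin_cases a <;> simp [hlam']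
  have hnormal a : IsStarNormal (ψ a) :=
    ⟨(by simpa [hdiag] using (hrel2 a a).symm : star (ψ a) * ψ a = ψ a * star (ψ a))⟩
  have hisometry : Ψᴴ * Ψ = 1 :=
    hΨ ▸ conjTranspose_quaternionicFrame_mul_self h01 h23 hnormal hsphere
  exact ⟨hisometry, Matrix.isIdempotentElem_mul_conjTranspose_self hisometry,
    Matrix.isHermitian_mul_conjTranspose_self Ψ⟩

/-- For the 4×2 matrix `Ψ` with columns `|ψ₁⟩ = (ψ₁,ψ₂,ψ₃,ψ₄)ᵗ` and
`|ψ₂⟩ = (−ψ₂*,ψ₁*,−ψ₄*,ψ₃*)ᵗ` one has `Ψ*Ψ = 1₂`, hence `p = ΨΨ*` is a self-adjoint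
idempotent in `M₄(A(S_{θ'}^7))`. -/
theorem stmt_14
    (A : Type*) [Ring A] [Algebra ℂ A] [StarRing A] [StarModule ℂ A]
    (lam mu : ℂ) (hmusq : mu ^ 2 = lam) (hmuabs : mu * (starRingEnd ℂ) mu = 1)
    (ψ : Fin 4 → A)
    (lam' : Fin 4 → Fin 4 → ℂ)
    (hlam' : lam' = fun a b =>
      !![(1 : ℂ), 1, (starRingEnd ℂ) mu, mu;
         1, 1, mu, (starRingEnd ℂ) mu;
         mu, (starRingEnd ℂ) mu, 1, 1;
         (starRingEnd ℂ) mu, mu, 1, 1] a b)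
    (hrel1 : ∀ a b, ψ a * ψ b = lam' a b • (ψ b * ψ a))
    (hrel2 : ∀ a b, ψ a * star (ψ b) = lam' b a • (star (ψ b) * ψ a))
    (hsphere : ∑ a, star (ψ a) * ψ a = 1)
    (Ψ : Matrix (Fin 4) (Fin 2) A)
    (hΨ : Ψ = Matrix.of ![![ψ 0, -star (ψ 1)],
                          ![ψ 1,  star (ψ 0)],
                          ![ψ 2, -star (ψ 3)],
                          ![ψ 3,  star (ψ 2)]]) :
    Ψᴴ * Ψ = 1
    ∧ (Ψ * Ψᴴ) * (Ψ * Ψᴴ) = Ψ * Ψᴴ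
    ∧ (Ψ * Ψᴴ)ᴴ = Ψ * Ψᴴ :=
  stmt_14_general A mu ψ lam' hlam' hrel1 hrel2 hsphere Ψ hΨ
end

section
/- The 4×4 matrix p = ΨΨ* equals (1/2) of the matrix with rows [1+z₀, 0, z₁, −μ̄ z₂*; 0, 1+z₀, z₂, μ z₁*; z₁*, z₂*, 1−z₀, 0; −μ z₂, μ̄ z₁, 0, 1−z₀], where z₀, z₁, z₂ are defined from the ψ_a as in the Hopf fibration formulas; in particular all entries of p lie in the subalgebra A(S_θ^4) ⊆ A(S_{θ'}^7). -/
open scoped Matrix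

set_option maxHeartbeats 4000000 in
/-- The projection `p = ΨΨ*` equals `½` of the explicit matrix in the generators
`z₀, z₁, z₂` of `A(S_θ^4)`; in particular all entries of `p` lie in the *-subalgebra
of `A(S_{θ'}^7)` generated by `z₀, z₁, z₂`. -/
theorem stmt_15
    (A : Type*) [Ring A] [Algebra ℂ A] [StarRing A] [StarModule ℂ A]
    (lam mu : ℂ) (hmusq : mu ^ 2 = lam) (hmuabs : mu * (starRingEnd ℂ) mu = 1)
    (ψ : Fin 4 → A)
    (lam' : Fin 4 → Fin 4 → ℂ)
    (hlam' : lam' = fun a b =>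
      !![(1 : ℂ), 1, (starRingEnd ℂ) mu, mu;
         1, 1, mu, (starRingEnd ℂ) mu;
         mu, (starRingEnd ℂ) mu, 1, 1;
         (starRingEnd ℂ) mu, mu, 1, 1] a b)
    (hrel1 : ∀ a b, ψ a * ψ b = lam' a b • (ψ b * ψ a))
    (hrel2 : ∀ a b, ψ a * star (ψ b) = lam' b a • (star (ψ b) * ψ a))
    (hsphere : ∑ a, star (ψ a) * ψ a = 1)
    (Ψ : Matrix (Fin 4) (Fin 2) A)
    (hΨ : Ψ = Matrix.of ![![ψ 0, -star (ψ 1)],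
                          ![ψ 1,  star (ψ 0)],
                          ![ψ 2, -star (ψ 3)],
                          ![ψ 3,  star (ψ 2)]])
    (z₀ z₁ z₂ : A)
    (hz₀ : z₀ = star (ψ 0) * ψ 0 + star (ψ 1) * ψ 1
                 - star (ψ 2) * ψ 2 - star (ψ 3) * ψ 3)
    (hz₁ : z₁ = 2 * (ψ 0 * star (ψ 2) + star (ψ 1) * ψ 3))
    (hz₂ : z₂ = 2 * (-(star (ψ 0) * ψ 3) + ψ 1 * star (ψ 2))) :
    Ψ * Ψᴴ = (1/2 : ℂ) • Matrix.of
      ![![1 + z₀, 0, z₁, -((starRingEnd ℂ) mu • star z₂)],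
        ![0, 1 + z₀, z₂, mu • star z₁],
        ![star z₁, star z₂, 1 - z₀, 0],
        ![-(mu • z₂), (starRingEnd ℂ) mu • z₁, 0, 1 - z₀]]
    ∧ ∀ i j, (Ψ * Ψᴴ) i j ∈
        Algebra.adjoin ℂ ({z₀, z₁, z₂, star z₁, star z₂} : Set A) := by
  have heq : Ψ * Ψᴴ = (1/2 : ℂ) • Matrix.of
      ![![1 + z₀, 0, z₁, -((starRingEnd ℂ) mu • star z₂)],
        ![0, 1 + z₀, z₂, mu • star z₁],
        ![star z₁, star z₂, 1 - z₀, 0],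
        ![-(mu • z₂), (starRingEnd ℂ) mu • z₁, 0, 1 - z₀]] := by
    have R00 : ψ 0 * star (ψ 0) = (1 : ℂ) • (star (ψ 0) * ψ 0) := by
      rw [hrel2 0 0, show lam' 0 0 = (1:ℂ) by rw [hlam']; norm_num [Matrix.vecHead, Matrix.vecTail]]
    have R01 : ψ 0 * star (ψ 1) = (1 : ℂ) • (star (ψ 1) * ψ 0) := by
      rw [hrel2 0 1, show lam' 1 0 = (1:ℂ) by rw [hlam']; norm_num [Matrix.vecHead, Matrix.vecTail]]
    have R02 : ψ 0 * star (ψ 2) = (mu : ℂ) • (star (ψ 2) * ψ 0) := by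
      rw [hrel2 0 2, show lam' 2 0 = (mu:ℂ) by rw [hlam']; norm_num [Matrix.vecHead, Matrix.vecTail]; rfl]
    have R03 : ψ 0 * star (ψ 3) = ((starRingEnd ℂ) mu : ℂ) • (star (ψ 3) * ψ 0) := by
      rw [hrel2 0 3, show lam' 3 0 = ((starRingEnd ℂ) mu:ℂ) by rw [hlam']; norm_num [Matrix.vecHead, Matrix.vecTail]; rfl]
    have R10 : ψ 1 * star (ψ 0) = (1 : ℂ) • (star (ψ 0) * ψ 1) := by
      rw [hrel2 1 0, show lam' 0 1 = (1:ℂ) by rw [hlam']; norm_num [Matrix.vecHead, Matrix.vecTail]]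
    have R11 : ψ 1 * star (ψ 1) = (1 : ℂ) • (star (ψ 1) * ψ 1) := by
      rw [hrel2 1 1, show lam' 1 1 = (1:ℂ) by rw [hlam']; norm_num [Matrix.vecHead, Matrix.vecTail]]
    have R12 : ψ 1 * star (ψ 2) = ((starRingEnd ℂ) mu : ℂ) • (star (ψ 2) * ψ 1) := by
      rw [hrel2 1 2, show lam' 2 1 = ((starRingEnd ℂ) mu:ℂ) by rw [hlam']; norm_num [Matrix.vecHead, Matrix.vecTail]; rfl]
    have R13 : ψ 1 * star (ψ 3) = (mu : ℂ) • (star (ψ 3) * ψ 1) := by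
      rw [hrel2 1 3, show lam' 3 1 = (mu:ℂ) by rw [hlam']; norm_num [Matrix.vecHead, Matrix.vecTail]; rfl]
    have R20 : ψ 2 * star (ψ 0) = ((starRingEnd ℂ) mu : ℂ) • (star (ψ 0) * ψ 2) := by
      rw [hrel2 2 0, show lam' 0 2 = ((starRingEnd ℂ) mu:ℂ) by rw [hlam']; norm_num [Matrix.vecHead, Matrix.vecTail]; rfl]
    have R21 : ψ 2 * star (ψ 1) = (mu : ℂ) • (star (ψ 1) * ψ 2) := by
      rw [hrel2 2 1, show lam' 1 2 = (mu:ℂ) by rw [hlam']; norm_num [Matrix.vecHead, Matrix.vecTail]; rfl]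
    have R22 : ψ 2 * star (ψ 2) = (1 : ℂ) • (star (ψ 2) * ψ 2) := by
      rw [hrel2 2 2, show lam' 2 2 = (1:ℂ) by rw [hlam']; norm_num [Matrix.vecHead, Matrix.vecTail]; rfl]
    have R23 : ψ 2 * star (ψ 3) = (1 : ℂ) • (star (ψ 3) * ψ 2) := by
      rw [hrel2 2 3, show lam' 3 2 = (1:ℂ) by rw [hlam']; norm_num [Matrix.vecHead, Matrix.vecTail]; rfl]
    have R30 : ψ 3 * star (ψ 0) = (mu : ℂ) • (star (ψ 0) * ψ 3) := by
      rw [hrel2 3 0, show lam' 0 3 = (mu:ℂ) by rw [hlam']; norm_num [Matrix.vecHead, Matrix.vecTail]; rfl]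
    have R31 : ψ 3 * star (ψ 1) = ((starRingEnd ℂ) mu : ℂ) • (star (ψ 1) * ψ 3) := by
      rw [hrel2 3 1, show lam' 1 3 = ((starRingEnd ℂ) mu:ℂ) by rw [hlam']; norm_num [Matrix.vecHead, Matrix.vecTail]; rfl]
    have R32 : ψ 3 * star (ψ 2) = (1 : ℂ) • (star (ψ 2) * ψ 3) := by
      rw [hrel2 3 2, show lam' 2 3 = (1:ℂ) by rw [hlam']; norm_num [Matrix.vecHead, Matrix.vecTail]; rfl]
    have R33 : ψ 3 * star (ψ 3) = (1 : ℂ) • (star (ψ 3) * ψ 3) := by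
      rw [hrel2 3 3, show lam' 3 3 = (1:ℂ) by rw [hlam']; norm_num [Matrix.vecHead, Matrix.vecTail]; rfl]
  
    rw [Fin.sum_univ_four] at hsphere
    subst hΨ hz₀ hz₁ hz₂
    ext i j
    fin_cases i <;> fin_cases j <;>
      simp [Matrix.mul_apply, Fin.sum_univ_two,
        R00, R01, R02, R03, R10, R11, R12, R13, R20, R21, R22, R23, R30, R31, R32, R33,
        two_mul, mul_two, mul_add, add_mul, neg_mul, mul_neg]
    all_goals (try rw [← hsphere])
    all_goals
      (first | module |
        (match_scalars <;>
          first
            | ring1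
            | linear_combination hmuabs
            | linear_combination -hmuabs))
  refine ⟨heq, fun i j => ?_⟩
  set S := Algebra.adjoin ℂ ({z₀, z₁, z₂, star z₁, star z₂} : Set A) with hS
  have m0 : z₀ ∈ S := Algebra.subset_adjoin (by simp)
  have m1 : z₁ ∈ S := Algebra.subset_adjoin (by simp)
  have m2 : z₂ ∈ S := Algebra.subset_adjoin (by simp)
  have m3 : star z₁ ∈ S := Algebra.subset_adjoin (by simp)
  have m4 : star z₂ ∈ S := Algebra.subset_adjoin (by simp)
  rw [heq]
  fin_cases i <;> fin_cases j <;>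
    simp [Matrix.smul_apply]
  all_goals try apply S.neg_mem
  all_goals
    first
      | exact zero_mem S
      | exact S.add_mem (S.smul_mem S.one_mem _) (S.smul_mem m0 _)
      | exact S.sub_mem (S.smul_mem S.one_mem _) (S.smul_mem m0 _)
      | exact S.smul_mem (S.sub_mem S.one_mem m0) _
      | exact S.smul_mem m1 _
      | exact S.smul_mem m2 _
      | exact S.smul_mem m3 _
      | exact S.smul_mem m4 _
      | exact S.smul_mem (S.smul_mem m1 _) _
      | exact S.smul_mem (S.smul_mem m2 _) _
      | exact S.smul_mem (S.smul_mem m3 _) _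
      | exact S.smul_mem (S.smul_mem m4 _) _
end
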